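/- arXiv:1803.02624 — 6 statements merged into one kernel-verified Lean document; each statement's English description precedes it below -/
import Mathlib

section
/- Let P be a transition matrix on a finite state space Ω satisfying the lumpability condition with respect to an equivalence relation ∼, and let π be a probability distribution on Ω satisfying detailed balance with respect to P, i.e. π x · P x y = π y · P y x for all x, y ∈ Ω. Then the pushforward distribution π̄ on the quotient Ω̄, defined by π̄(C) = ∑_{z ∈ C} π z, satisfies detailed balance with respect to the projected matrix P̄: π̄([x]) · P̄([x],[y]) = π̄([y]) · P̄([y],[x]) for all x, y ∈ Ω. -/
/-!
By lumpability, `P̄(C, D)` is the mass that `P` sends from any single point of `C` into `D`, so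
`π̄(C) P̄(C, D)` is the total flow `∑_{a ∈ C, b ∈ D} π a P a b` from `C` to `D`; detailed balance
makes this flow symmetric in `C` and `D`.
-/

open Finset

noncomputable section

variable {Ω : Type*}

/-- The sum of `μ` over the equivalence class `C` of the setoid `s`. -/
def Pushforward (s : Setoid Ω) [Fintype Ω] [DecidableEq (Quotient s)]
    (μ : Ω → ℝ) (C : Quotient s) : ℝ :=
  ∑ z ∈ Finset.univ.filter (fun z => Quotient.mk s z = C), μ z

/-- The lumpability condition. -/
def IsLumpable (s : Setoid Ω) [Fintype Ω] [DecidableEq (Quotient s)]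
    (P : Ω → Ω → ℝ) : Prop :=
  ∀ x x' : Ω, s.r x x' → ∀ C : Quotient s,
    Pushforward s (P x) C = Pushforward s (P x') C

/-- The projected (lumped) transition matrix on the quotient. -/
def Proj (s : Setoid Ω) [Fintype Ω] [DecidableEq (Quotient s)]
    (P : Ω → Ω → ℝ) (C D : Quotient s) : ℝ :=
  Pushforward s (P C.out) D

section

variable [Fintype Ω] {s : Setoid Ω} [DecidableEq (Quotient s)] {P : Ω → Ω → ℝ}

theorem IsLumpable.pushforward_eq_proj (hlump : IsLumpable s P) {a : Ω} {C : Quotient s}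
    (ha : Quotient.mk s a = C) (D : Quotient s) :
    Pushforward s (P a) D = Proj s P C D :=
  hlump a C.out (Quotient.exact (by rw [ha, Quotient.out_eq])) D

theorem IsLumpable.pushforward_mul_proj (hlump : IsLumpable s P) (μ : Ω → ℝ)
    (C D : Quotient s) :
    Pushforward s μ C * Proj s P C D =
      ∑ a ∈ univ.filter (fun a => Quotient.mk s a = C),
        ∑ b ∈ univ.filter (fun b => Quotient.mk s b = D), μ a * P a b := by
  rw [Pushforward, sum_mul]
  refine sum_congr rfl fun a ha => ?_
  rw [← hlump.pushforward_eq_proj (mem_filter.mp ha).2, Pushforward, mul_sum]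

end

theorem projected_detailed_balance_general
    [Fintype Ω] (s : Setoid Ω) [DecidableEq (Quotient s)]
    (P : Ω → Ω → ℝ)
    (hlump : IsLumpable s P)
    (π : Ω → ℝ)
    (hdb : ∀ x y, π x * P x y = π y * P y x) :
    ∀ x y : Ω,
      Pushforward s π (Quotient.mk s x) * Proj s P (Quotient.mk s x) (Quotient.mk s y) =
      Pushforward s π (Quotient.mk s y) * Proj s P (Quotient.mk s y) (Quotient.mk s x) := by
  intro x y
  rw [hlump.pushforward_mul_proj, hlump.pushforward_mul_proj, sum_comm]
  exact sum_congr rfl fun b _ => sum_congr rfl fun a _ => hdb a b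

/-- detailed balance is inherited by the projected chain. -/
theorem projected_detailed_balance
    [Fintype Ω] (s : Setoid Ω) [DecidableEq (Quotient s)] [Fintype (Quotient s)]
    (P : Ω → Ω → ℝ)
    (hP0 : ∀ x y, 0 ≤ P x y) (hP1 : ∀ x, ∑ y, P x y = 1)
    (hlump : IsLumpable s P)
    (π : Ω → ℝ) (hπ0 : ∀ x, 0 ≤ π x) (hπ1 : ∑ x, π x = 1)
    (hdb : ∀ x y, π x * P x y = π y * P y x) :
    ∀ x y : Ω,
      Pushforward s π (Quotient.mk s x) * Proj s P (Quotient.mk s x) (Quotient.mk s y) =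
      Pushforward s π (Quotient.mk s y) * Proj s P (Quotient.mk s y) (Quotient.mk s x) :=
  projected_detailed_balance_general s P hlump π hdb
end
end

section
/- Let P be a transition matrix on a finite state space Ω satisfying the lumpability condition with respect to an equivalence relation ∼, and let π be any probability distribution on Ω with pushforward π̄ on the quotient Ω̄. Then for every x ∈ Ω and every t ∈ ℕ, the total variation distance of the t-step distribution of P started at x from π is at least the total variation distance of the t-step distribution of the projected matrix P̄ started at [x] from π̄: d_V(𝟙_x P^t, π) ≥ d_V(𝟙_{[x]} P̄^t, π̄). -/
/-! Lumpability says that pushing a distribution forward to the quotient commutes with one step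
of the chain, hence with `t` steps, and the pushforward of `𝟙_x` is `𝟙_[x]`. Pushing forward
only merges mass within classes, so by the triangle inequality it cannot increase total
variation distance. -/

open Finset

noncomputable section

variable {Ω : Type*}

/-- One step of the Markov chain: `(μP)(y) = ∑ x, μ x * P x y`. -/
def Step {S : Type*} [Fintype S] (P : S → S → ℝ) (μ : S → ℝ) : S → ℝ :=
  fun y => ∑ x, μ x * P x y

/-- The one-point distribution at `x`. -/
def onePoint {S : Type*} [DecidableEq S] (x : S) : S → ℝ :=
  fun y => if y = x then 1 else 0

/-- Total variation distance between two distributions on a finite set. -/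
def dV {S : Type*} [Fintype S] (μ ν : S → ℝ) : ℝ :=
  (1 / 2) * ∑ x, |μ x - ν x|

section Lumping

variable [Fintype Ω] (s : Setoid Ω) [DecidableEq (Quotient s)]

theorem sum_mul_comp_mk [Fintype (Quotient s)] (μ : Ω → ℝ) (f : Quotient s → ℝ) :
    ∑ x, μ x * f (Quotient.mk s x) = ∑ D, Pushforward s μ D * f D := by
  rw [← sum_fiberwise univ (Quotient.mk s)]
  refine sum_congr rfl fun D _ => ?_
  rw [Pushforward, sum_mul]
  exact sum_congr rfl fun x hx => by rw [(mem_filter.mp hx).2]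

theorem pushforward_onePoint [DecidableEq Ω] (x : Ω) :
    Pushforward s (onePoint x) = onePoint (Quotient.mk s x) := by
  funext C
  simp only [Pushforward, onePoint, sum_ite_eq', mem_filter, mem_univ,
    true_and]
  exact if_congr eq_comm rfl rfl

theorem proj_mk {P : Ω → Ω → ℝ} (hlump : IsLumpable s P) (x : Ω) (C : Quotient s) :
    Proj s P (Quotient.mk s x) C = Pushforward s (P x) C :=
  hlump _ _ (Quotient.exact (Quotient.out_eq _)) C

theorem pushforward_step_apply (P : Ω → Ω → ℝ) (μ : Ω → ℝ) (C : Quotient s) :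
    Pushforward s (Step P μ) C = ∑ x, μ x * Pushforward s (P x) C := by
  simp only [Pushforward, Step, mul_sum]
  exact sum_comm

theorem semiconj_pushforward_step [Fintype (Quotient s)] {P : Ω → Ω → ℝ}
    (hlump : IsLumpable s P) :
    Function.Semiconj (Pushforward s) (Step P) (Step (Proj s P)) := fun μ => by
  funext C
  simp only [pushforward_step_apply, ← proj_mk s hlump]
  exact sum_mul_comp_mk s μ (fun D => Proj s P D C)

theorem dV_pushforward_le [Fintype (Quotient s)] (μ ν : Ω → ℝ) :
    dV (Pushforward s μ) (Pushforward s ν) ≤ dV μ ν := by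
  unfold dV
  gcongr
  calc ∑ C, |Pushforward s μ C - Pushforward s ν C|
      ≤ ∑ C, Pushforward s (fun z => |μ z - ν z|) C := by
        refine sum_le_sum fun C _ => ?_
        rw [Pushforward, Pushforward, ← sum_sub_distrib]
        exact abs_sum_le_sum_abs _ _
    _ = ∑ z, |μ z - ν z| := sum_fiberwise _ _ _

end Lumping

theorem dV_proj_le_general
    [Fintype Ω] [DecidableEq Ω] (s : Setoid Ω) [DecidableEq (Quotient s)]
    [Fintype (Quotient s)]
    (P : Ω → Ω → ℝ)
    (hlump : IsLumpable s P)
    (π : Ω → ℝ) :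
    ∀ (x : Ω) (t : ℕ),
      dV ((Step P)^[t] (onePoint x)) π ≥
        dV ((Step (Proj s P))^[t] (onePoint (Quotient.mk s x))) (Pushforward s π) := by
  intro x t
  rw [ge_iff_le, ← pushforward_onePoint s x,
    ← ((semiconj_pushforward_step s hlump).iterate_right t) (onePoint x)]
  exact dV_pushforward_le s _ _

/-- the total variation distance of the `t`-step distribution of the
projected chain from the pushforward of `π` is at most that of the original chain
from `π`. -/
theorem dV_proj_le
    [Fintype Ω] [DecidableEq Ω] (s : Setoid Ω) [DecidableEq (Quotient s)]
    [Fintype (Quotient s)]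
    (P : Ω → Ω → ℝ)
    (hP0 : ∀ x y, 0 ≤ P x y) (hP1 : ∀ x, ∑ y, P x y = 1)
    (hlump : IsLumpable s P)
    (π : Ω → ℝ) (hπ0 : ∀ x, 0 ≤ π x) (hπ1 : ∑ x, π x = 1) :
    ∀ (x : Ω) (t : ℕ),
      dV ((Step P)^[t] (onePoint x)) π ≥
        dV ((Step (Proj s P))^[t] (onePoint (Quotient.mk s x))) (Pushforward s π) :=
  dV_proj_le_general s P hlump π
end
end

section
/- Let P be a transition matrix on a finite state space Ω satisfying the lumpability condition with respect to an equivalence relation ∼, let π be a probability distribution on Ω with pushforward π̄ on Ω̄, and let ε > 0, T ∈ ℕ. If for every x ∈ Ω and every t > T one has d_V(𝟙_x P^t, π) ≤ ε, then for every equivalence class C ∈ Ω̄ and every t > T one has d_V(𝟙_C P̄^t, π̄) ≤ ε. (In other words, the mixing time of the projected chain is at most the mixing time of the original chain: τ(ε) ≥ τ̄(ε).) -/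
open Finset

noncomputable section

variable {Ω : Type*}

/-!
Lumping commutes with the dynamics: by lumpability, pushing `μP` forward to the classes gives
the pushforward of `μ` moved by `P̄`, so `𝟙_C P̄^t` is the pushforward of `𝟙_x P^t` for any
`x ∈ C`. Pushing forward cannot increase total variation distance (triangle inequality inside
each class), hence the bound for the original chain passes to the projected one.
-/

namespace Pushforward

variable [Fintype Ω] (s : Setoid Ω) [DecidableEq (Quotient s)]

theorem sum_eq [Fintype (Quotient s)] (μ : Ω → ℝ) : ∑ C, Pushforward s μ C = ∑ z, μ z :=
  sum_fiberwise _ _ _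

theorem sum_mul_eq [Fintype (Quotient s)] (μ : Ω → ℝ) (f : Quotient s → ℝ) :
    ∑ C, Pushforward s μ C * f C = ∑ z, μ z * f (Quotient.mk s z) := by
  simp_rw [Pushforward, sum_mul]
  rw [← sum_fiberwise univ (Quotient.mk s) (fun z => μ z * f (Quotient.mk s z))]
  refine sum_congr rfl fun C _ => sum_congr rfl fun z hz => ?_
  rw [(mem_filter.1 hz).2]

theorem onePoint_eq [DecidableEq Ω] (x : Ω) :
    Pushforward s (onePoint x) = onePoint (Quotient.mk s x) := by
  funext D
  simp [Pushforward, onePoint, eq_comm]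

theorem dV_le [Fintype (Quotient s)] (μ ν : Ω → ℝ) :
    dV (Pushforward s μ) (Pushforward s ν) ≤ dV μ ν := by
  unfold dV
  gcongr
  calc ∑ C, |Pushforward s μ C - Pushforward s ν C|
      = ∑ C, |Pushforward s (fun z => μ z - ν z) C| := by
        simp only [Pushforward, sum_sub_distrib]
    _ ≤ ∑ C, Pushforward s (fun z => |μ z - ν z|) C :=
        sum_le_sum fun _ _ => abs_sum_le_sum_abs _ _
    _ = ∑ z, |μ z - ν z| := sum_eq s _

end Pushforward

namespace IsLumpable

variable [Fintype Ω] {s : Setoid Ω} [DecidableEq (Quotient s)] {P : Ω → Ω → ℝ}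

theorem pushforward_eq_proj_s6 (hlump : IsLumpable s P) (x : Ω) (D : Quotient s) :
    Pushforward s (P x) D = Proj s P (Quotient.mk s x) D :=
  hlump _ _ (Setoid.symm (Quotient.mk_out x)) D

theorem semiconj_pushforward_step [Fintype (Quotient s)] (hlump : IsLumpable s P) :
    Function.Semiconj (Pushforward s) (Step P) (Step (Proj s P)) := by
  intro μ
  funext D
  calc Pushforward s (Step P μ) D = ∑ x, μ x * Pushforward s (P x) D := by
        simp only [Pushforward, Step, mul_sum]
        exact sum_comm
    _ = ∑ x, μ x * Proj s P (Quotient.mk s x) D := by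
        simp_rw [hlump.pushforward_eq_proj_s6]
    _ = Step (Proj s P) (Pushforward s μ) D := (Pushforward.sum_mul_eq s μ (Proj s P · D)).symm

end IsLumpable

theorem mixing_time_proj_le_general
    [Fintype Ω] [DecidableEq Ω] (s : Setoid Ω) [DecidableEq (Quotient s)]
    [Fintype (Quotient s)]
    (P : Ω → Ω → ℝ)
    (hlump : IsLumpable s P)
    (π : Ω → ℝ)
    (ε : ℝ) (T : ℕ)
    (hmix : ∀ (x : Ω) (t : ℕ), T < t → dV ((Step P)^[t] (onePoint x)) π ≤ ε) :
    ∀ (C : Quotient s) (t : ℕ), T < t →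
      dV ((Step (Proj s P))^[t] (onePoint C)) (Pushforward s π) ≤ ε := by
  intro C t ht
  have hlift : (Step (Proj s P))^[t] (onePoint C)
      = Pushforward s ((Step P)^[t] (onePoint C.out)) := by
    rw [hlump.semiconj_pushforward_step.iterate_right t, Pushforward.onePoint_eq,
      Quotient.out_eq]
  rw [hlift]
  exact (Pushforward.dV_le s _ π).trans (hmix C.out t ht)

/-- the mixing time of the projected chain is at most the mixing time of
the original chain: if after time `T` the original chain is within `ε` of `π` from every
starting state, then after time `T` the projected chain is within `ε` of the pushforward
of `π` from every starting class. -/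
theorem mixing_time_proj_le
    [Fintype Ω] [DecidableEq Ω] (s : Setoid Ω) [DecidableEq (Quotient s)]
    [Fintype (Quotient s)]
    (P : Ω → Ω → ℝ)
    (hP0 : ∀ x y, 0 ≤ P x y) (hP1 : ∀ x, ∑ y, P x y = 1)
    (hlump : IsLumpable s P)
    (π : Ω → ℝ) (hπ0 : ∀ x, 0 ≤ π x) (hπ1 : ∑ x, π x = 1)
    (ε : ℝ) (hε : 0 < ε) (T : ℕ)
    (hmix : ∀ (x : Ω) (t : ℕ), T < t → dV ((Step P)^[t] (onePoint x)) π ≤ ε) :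
    ∀ (C : Quotient s) (t : ℕ), T < t →
      dV ((Step (Proj s P))^[t] (onePoint C)) (Pushforward s π) ≤ ε :=
  mixing_time_proj_le_general s P hlump π ε T hmix
end
end

section
/- Every trade is a sequence of switches: let A and B be m×n 0-1 matrices with identical row sums (for every row index i, the i-th row sums of A and B are equal) and identical column sums, and suppose A and B agree on all rows except possibly two rows i and j. Then there is a finite sequence of matrices A = M₀, M₁, …, M_N = B such that each M_{t+1} is obtained from M_t by a switch. -/
open Finset

/-- `B` is obtained from `A` by a single switch. -/
def IsSwitch {m n : ℕ} (A B : Fin m → Fin n → ℕ) : Prop :=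
  ∃ (i k : Fin m) (j l : Fin n), i ≠ k ∧ j ≠ l ∧
    A i j = 1 ∧ A k l = 1 ∧ A i l = 0 ∧ A k j = 0 ∧
    B i j = 0 ∧ B k l = 0 ∧ B i l = 1 ∧ B k j = 1 ∧
    ∀ p q, (p, q) ∉ ({(i, j), (k, l), (i, l), (k, j)} : Set (Fin m × Fin n)) →
      B p q = A p q

/-!
On every column where rows `i` and `j` of `A` and `B` differ, the column sums force `B` to
carry the two entries of `A` in swapped order, so `B` arises from `A` by exchanging rows `i`
and `j` on a set `D` of columns on which these two rows are complementary; the row sums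
say that row `i` has as many ones in `D` as row `j`. If `D` is nonempty it contains a
column `c` with pattern `(1, 0)` and a column `c'` with pattern `(0, 1)` in rows `(i, j)`;
exchanging the rows on `{c, c'}` is a switch, and leaves the same situation on
`D \ {c, c'}`.
-/

theorem Finset.sum_eq_sum_of_sum_univ_eq {α M : Type*} [Fintype α] [AddCancelCommMonoid M]
    (s : Finset α) {f g : α → M} (hfg : ∀ x ∉ s, f x = g x) (h : ∑ x, f x = ∑ x, g x) :
    ∑ x ∈ s, f x = ∑ x ∈ s, g x := by
  classical
  rw [← sum_add_sum_compl s f, ← sum_add_sum_compl s g,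
    sum_congr rfl fun x hx => hfg x (mem_compl.1 hx)] at h
  exact add_right_cancel h

theorem Finset.exists_mem_eq_one_of_sum_eq {α : Type*} {s : Finset α} {f g : α → ℕ}
    (hf : ∀ x ∈ s, f x = 0 ∨ f x = 1) (hfg : ∀ x ∈ s, f x ≠ g x)
    (hsum : ∑ x ∈ s, f x = ∑ x ∈ s, g x) (hs : s.Nonempty) : ∃ x ∈ s, f x = 1 := by
  by_contra! h
  have hf0 : ∀ x ∈ s, f x = 0 := fun x hx => (hf x hx).resolve_right (h x hx)
  rw [sum_eq_zero hf0, eq_comm, sum_eq_zero_iff] at hsum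
  obtain ⟨x, hx⟩ := hs
  exact hfg x hx ((hf0 x hx).trans (hsum x hx).symm)

section Column

variable {ι : Type*} [Fintype ι] [DecidableEq ι] {a b : ι → ℕ} {i j : ι}

theorem sum_pair_eq_of_sum_eq (hab : ∀ p, p ≠ i → p ≠ j → a p = b p)
    (hsum : ∑ p, a p = ∑ p, b p) : ∑ p ∈ {i, j}, a p = ∑ p ∈ {i, j}, b p :=
  sum_eq_sum_of_sum_univ_eq _ (fun p hp => by
    simp only [mem_insert, mem_singleton, not_or] at hp
    exact hab p hp.1 hp.2) hsum

theorem eq_of_sum_eq_of_apply_eq (hab : ∀ p, p ≠ i → p ≠ j → a p = b p)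
    (hsum : ∑ p, a p = ∑ p, b p) (hi : a i = b i) : a = b := by
  have hpair := sum_pair_eq_of_sum_eq hab hsum
  funext p
  by_cases hpi : p = i
  · rwa [hpi]
  by_cases hpj : p = j
  · subst hpj
    rw [sum_pair (Ne.symm hpi), sum_pair (Ne.symm hpi)] at hpair
    omega
  exact hab p hpi hpj

theorem eq_comp_swap_of_sum_eq_of_apply_ne (ha : ∀ p, a p = 0 ∨ a p = 1)
    (hb : ∀ p, b p = 0 ∨ b p = 1) (hab : ∀ p, p ≠ i → p ≠ j → a p = b p)
    (hsum : ∑ p, a p = ∑ p, b p) (hi : a i ≠ b i) : b = a ∘ Equiv.swap i j := by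
  have hpair := sum_pair_eq_of_sum_eq hab hsum
  have hij : i ≠ j := by
    rintro rfl
    simp only [insert_eq_of_mem, mem_singleton, sum_singleton] at hpair
    exact hi hpair
  rw [sum_pair hij, sum_pair hij] at hpair
  funext p
  rw [Function.comp_apply, Equiv.swap_apply_def]
  split_ifs with hpi hpj
  · subst hpi; have := ha p; have := ha j; have := hb p; have := hb j; omega
  · subst hpj; have := ha p; have := ha i; have := hb p; have := hb i; omega
  · exact (hab p hpi hpj).symm

end Column

section ExchangeRows

variable {ι κ α : Type*} [DecidableEq ι] [DecidableEq κ]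

def exchangeRows (A : ι → κ → α) (i k : ι) (S : Finset κ) : ι → κ → α :=
  fun p q => if q ∈ S then A (Equiv.swap i k p) q else A p q

variable {A : ι → κ → α} {i k : ι} {S T : Finset κ}

@[simp]
theorem exchangeRows_empty : exchangeRows A i k ∅ = A := by
  funext p q
  simp [exchangeRows]

theorem exchangeRows_apply_of_notMem {p : ι} {q : κ} (hq : q ∉ S) :
    exchangeRows A i k S p q = A p q :=
  if_neg hq

theorem exchangeRows_exchangeRows (h : Disjoint S T) :
    exchangeRows (exchangeRows A i k S) i k T = exchangeRows A i k (S ∪ T) := by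
  funext p q
  by_cases hqT : q ∈ T
  · have hqS : q ∉ S := disjoint_right.1 h hqT
    simp [exchangeRows, hqS, hqT]
  · simp [exchangeRows, hqT]

end ExchangeRows

theorem isSwitch_exchangeRows_pair {m n : ℕ} {A : Fin m → Fin n → ℕ} {i k : Fin m}
    {j l : Fin n} (hik : i ≠ k) (hjl : j ≠ l) (hij : A i j = 1) (hkl : A k l = 1)
    (hil : A i l = 0) (hkj : A k j = 0) : IsSwitch A (exchangeRows A i k {j, l}) := by
  refine ⟨i, k, j, l, hik, hjl, hij, hkl, hil, hkj, ?_, ?_, ?_, ?_, fun p q hpq => ?_⟩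
  iterate 4 simp [exchangeRows, hjl, hjl.symm, hij, hkl, hil, hkj]
  simp only [Set.mem_insert_iff, Set.mem_singleton_iff, Prod.mk.injEq, not_or, not_and] at hpq
  unfold exchangeRows
  split_ifs with hq
  · rw [mem_insert, mem_singleton] at hq
    have hpi : p ≠ i := by rcases hq with rfl | rfl <;> tauto
    have hpk : p ≠ k := by rcases hq with rfl | rfl <;> tauto
    rw [Equiv.swap_apply_of_ne_of_ne hpi hpk]
  · rfl

theorem reflTransGen_isSwitch_exchangeRows {m n : ℕ} (A : Fin m → Fin n → ℕ)
    (hA : ∀ p q, A p q = 0 ∨ A p q = 1) (i k : Fin m) (S : Finset (Fin n))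
    (hne : ∀ q ∈ S, A i q ≠ A k q) (hsum : ∑ q ∈ S, A i q = ∑ q ∈ S, A k q) :
    Relation.ReflTransGen IsSwitch A (exchangeRows A i k S) := by
  induction S using Finset.strongInduction generalizing A with
  | H S ih =>
  rcases S.eq_empty_or_nonempty with rfl | hS
  · rw [exchangeRows_empty]
  obtain ⟨c, hcS, hic⟩ := exists_mem_eq_one_of_sum_eq (fun q _ => hA i q) hne hsum hS
  obtain ⟨c', hc'S, hkc'⟩ := exists_mem_eq_one_of_sum_eq (fun q _ => hA k q)
    (fun q hq => (hne q hq).symm) hsum.symm hS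
  have hkc : A k c = 0 := (hA k c).resolve_right fun h => hne c hcS (hic.trans h.symm)
  have hic' : A i c' = 0 := (hA i c').resolve_right fun h => hne c' hc'S (h.trans hkc'.symm)
  have hik : i ≠ k := by rintro rfl; exact hne c hcS rfl
  have hcc' : c ≠ c' := by rintro rfl; omega
  have hP : {c, c'} ⊆ S := insert_subset hcS (singleton_subset_iff.2 hc'S)
  set A' := exchangeRows A i k {c, c'}
  have hA'_eq : ∀ p, ∀ q ∈ S \ {c, c'}, A' p q = A p q :=
    fun p q hq => exchangeRows_apply_of_notMem (mem_sdiff.1 hq).2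
  have hsum_i : ∑ q ∈ S \ {c, c'}, A i q + (A i c + A i c') = ∑ q ∈ S, A i q := by
    rw [← sum_pair hcc']; exact sum_sdiff hP
  have hsum_k : ∑ q ∈ S \ {c, c'}, A k q + (A k c + A k c') = ∑ q ∈ S, A k q := by
    rw [← sum_pair hcc']; exact sum_sdiff hP
  have hsum' : ∑ q ∈ S \ {c, c'}, A' i q = ∑ q ∈ S \ {c, c'}, A' k q :=
    calc ∑ q ∈ S \ {c, c'}, A' i q = ∑ q ∈ S \ {c, c'}, A i q := sum_congr rfl (hA'_eq i)
      _ = ∑ q ∈ S \ {c, c'}, A k q := by omega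
      _ = ∑ q ∈ S \ {c, c'}, A' k q := (sum_congr rfl (hA'_eq k)).symm
  have hrest := ih (S \ {c, c'}) (sdiff_ssubset hP (insert_nonempty _ _)) A'
    (fun p q => by unfold A' exchangeRows; split_ifs <;> apply hA)
    (fun q hq => by rw [hA'_eq i q hq, hA'_eq k q hq]; exact hne q (mem_sdiff.1 hq).1) hsum'
  rw [exchangeRows_exchangeRows disjoint_sdiff, union_sdiff_of_subset hP] at hrest
  exact .head (isSwitch_exchangeRows_pair hik hcc' hic hkc' hic' hkc) hrest

theorem eq_exchangeRows_of_sum_eq {m n : ℕ} {A B : Fin m → Fin n → ℕ}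
    (hA : ∀ p q, A p q = 0 ∨ A p q = 1) (hB : ∀ p q, B p q = 0 ∨ B p q = 1)
    (hcol : ∀ q, ∑ p, A p q = ∑ p, B p q) {i j : Fin m}
    (hrows : ∀ p, p ≠ i → p ≠ j → ∀ q, A p q = B p q) :
    B = exchangeRows A i j {q | A i q ≠ B i q} := by
  funext p q
  have hab : ∀ p, p ≠ i → p ≠ j → A p q = B p q := fun p hpi hpj => hrows p hpi hpj q
  unfold exchangeRows
  split_ifs with hq
  · rw [mem_filter] at hq
    exact congrFun (eq_comp_swap_of_sum_eq_of_apply_ne (hA · q) (hB · q) hab (hcol q) hq.2) p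
  · simp only [mem_filter, mem_univ, true_and, not_not] at hq
    exact (congrFun (eq_of_sum_eq_of_apply_eq hab (hcol q) hq) p).symm

/-- every trade is a sequence of switches: if two 0-1 matrices have the
same row sums and column sums and agree on all rows except possibly the two rows `i`
and `j`, then one can be transformed into the other by a finite sequence of
switches. -/
theorem trade_is_sequence_of_switches {m n : ℕ} (A B : Fin m → Fin n → ℕ)
    (hA01 : ∀ p q, A p q = 0 ∨ A p q = 1)
    (hB01 : ∀ p q, B p q = 0 ∨ B p q = 1)
    (hrow : ∀ p, ∑ q, A p q = ∑ q, B p q)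
    (hcol : ∀ q, ∑ p, A p q = ∑ p, B p q)
    (i j : Fin m)
    (hrows : ∀ p, p ≠ i → p ≠ j → ∀ q, A p q = B p q) :
    Relation.ReflTransGen IsSwitch A B := by
  set D : Finset (Fin n) := {q | A i q ≠ B i q}
  have hB : B = exchangeRows A i j D := eq_exchangeRows_of_sum_eq hA01 hB01 hcol hrows
  have hBi : ∀ q ∈ D, B i q = A j q := fun q hq => by
    rw [hB, exchangeRows, if_pos hq, Equiv.swap_apply_left]
  have hne : ∀ q ∈ D, A i q ≠ A j q := fun q hq => hBi q hq ▸ (mem_filter.1 hq).2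
  have hsum : ∑ q ∈ D, A i q = ∑ q ∈ D, A j q := by
    rw [sum_eq_sum_of_sum_univ_eq D (fun q hq => by simpa [D] using hq) (hrow i)]
    exact sum_congr rfl hBi
  rw [hB]
  exact reflTransGen_isSwitch_exchangeRows A hA01 i j D hne hsum
end

section
/- The switch chain with degree-preserving relabelling is connected on simple directed graphs (no hexagonal moves are needed): let A and B be n×n 0-1 matrices with zero diagonal such that for every index i the i-th row sums of A and B agree and the i-th column sums of A and B agree. Then there is a finite sequence A = M₀, M₁, …, M_N = B of n×n 0-1 matrices with zero diagonal in which each M_{t+1} is obtained from M_t either (a) by a switch whose result again has zero diagonal, or (b) by a relabelling M_{t+1} i j = M_t (ρ i) (ρ j) for some permutation ρ of {1,…,n} that preserves degrees, i.e. for every i the row sum of row ρ(i) of M_t equals the row sum of row i of M_t and the column sum of column ρ(i) of M_t equals the column sum of column i of M_t. -/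
open Finset

/-- One step of the switch chain with degree-preserving relabelling on adjacency
matrices of simple directed graphs: either a switch whose result again has zero
diagonal, or a relabelling of the nodes by a permutation preserving in- and
out-degrees. -/
def DirectedStep {n : ℕ} (M M' : Fin n → Fin n → ℕ) : Prop :=
  (IsSwitch M M' ∧ ∀ i, M' i i = 0) ∨
  (∃ ρ : Equiv.Perm (Fin n),
      (∀ i j, M' i j = M (ρ i) (ρ j)) ∧
      (∀ i, ∑ j, M (ρ i) j = ∑ j, M i j) ∧
      (∀ i, ∑ j, M j (ρ i) = ∑ j, M j i))


/-!
Induct on the number of entries in which `A` and `B` differ, moving both matrices. Take a row `i`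
with `A i j = 1 > B i j` and `A i l = 0 < B i l`. A switch of `A` on rows `i, k` and columns
`j, l` lowers the distance unless `A` and `B` already agree on row `k` in these columns, and
symmetrically for `B`; if no such switch helps, counting the rows with pattern `(0, 1)` and
`(1, 0)` in columns `j, l` of `A` and of `B` forces `j → l` in `A` and `l → j` in `B`. Repeating this for
the transposes and for row `l` yields a directed triangle `i → j → l → i` in `A` that is reversed
in `B`. If some vertex `x` outside the triangle sees `j` and `l` differently, three switches
through `x` reverse the triangle; otherwise `j` and `l` have equal degrees, and the relabelling
that exchanges them reverses it.
-/

open Function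

section Sums

variable {ι M : Type*} [Fintype ι]

theorem sum_eq_sum_of_eqOn_compl [DecidableEq ι] [AddCommMonoid M] {f g : ι → M} (s : Finset ι)
    (hs : ∑ x ∈ s, f x = ∑ x ∈ s, g x) (hsc : ∀ x ∉ s, f x = g x) : ∑ x, f x = ∑ x, g x := by
  rw [← sum_add_sum_compl s f, ← sum_add_sum_compl s g, hs,
    sum_congr rfl fun x hx => hsc x (mem_compl.1 hx)]

theorem exists_lt_of_sum_eq_of_ne [AddCommMonoid M] [LinearOrder M] [IsOrderedCancelAddMonoid M]
    {f g : ι → M} (h : ∑ x, f x = ∑ x, g x) (hne : f ≠ g) : ∃ x, f x < g x := by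
  by_contra! hle
  exact hne <| funext fun x =>
    ((sum_eq_sum_iff_of_le fun x _ => hle x).1 h.symm x (mem_univ x)).symm

theorem sum_add_card_filter_eq {u v : ι → ℕ} (hu : ∀ k, u k = 0 ∨ u k = 1)
    (hv : ∀ k, v k = 0 ∨ v k = 1) :
    ∑ k, u k + #{k | u k = 0 ∧ v k = 1} = ∑ k, v k + #{k | v k = 0 ∧ u k = 1} := by
  simp only [card_filter, ← sum_add_distrib]
  refine sum_congr rfl fun k _ => ?_
  rcases hu k with h | h <;> rcases hv k with h' | h' <;> simp [h, h']

end Sums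

section Matrices

variable {V : Type*}

structure IsDigraphMatrix (M : V → V → ℕ) : Prop where
  zero_or_one : ∀ i j, M i j = 0 ∨ M i j = 1
  diag : ∀ i, M i i = 0

theorem IsDigraphMatrix.swap {M : V → V → ℕ} (hM : IsDigraphMatrix M) :
    IsDigraphMatrix (swap M) :=
  ⟨fun i j => hM.zero_or_one j i, hM.diag⟩

theorem eq_or_eq_or_eq_or_ne (a i j l : V) :
    a = i ∨ a = j ∨ a = l ∨ a ≠ i ∧ a ≠ j ∧ a ≠ l := by
  tauto

def diffCount [Fintype V] (A B : V → V → ℕ) : ℕ := #{z : V × V | A z.1 z.2 ≠ B z.1 z.2}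

theorem diffCount_comm [Fintype V] (A B : V → V → ℕ) : diffCount A B = diffCount B A := by
  simp only [diffCount, ne_comm]

theorem diffCount_swap [Fintype V] (A B : V → V → ℕ) :
    diffCount (swap A) (swap B) = diffCount A B :=
  card_equiv (Equiv.prodComm V V) (by simp [swap])

theorem diffCount_lt_of_eqOn_compl [Fintype V] [DecidableEq V] {A A' B : V → V → ℕ}
    (S : Finset (V × V)) (hS : ∀ z ∉ S, A' z.1 z.2 = A z.1 z.2)
    (hlt : #{z ∈ S | A' z.1 z.2 ≠ B z.1 z.2} < #{z ∈ S | A z.1 z.2 ≠ B z.1 z.2}) :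
    diffCount A' B < diffCount A B := by
  simp only [diffCount, card_filter] at hlt ⊢
  have hSc : ∑ z ∈ Sᶜ, (if A' z.1 z.2 ≠ B z.1 z.2 then 1 else 0)
      = ∑ z ∈ Sᶜ, (if A z.1 z.2 ≠ B z.1 z.2 then 1 else 0) :=
    sum_congr rfl fun z hz => by rw [hS z (mem_compl.1 hz)]
  rw [← sum_add_sum_compl S,
    ← sum_add_sum_compl S (fun z => if A z.1 z.2 ≠ B z.1 z.2 then 1 else 0), hSc]
  omega

def switch {α β : Type*} [DecidableEq α] [DecidableEq β] (A : α → β → ℕ) (i k : α) (j l : β) :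
    α → β → ℕ := fun p q =>
  if p = i ∧ q = j ∨ p = k ∧ q = l then 0
  else if p = i ∧ q = l ∨ p = k ∧ q = j then 1 else A p q

def transposeOn [DecidableEq V] (T : Finset V) (A : V → V → ℕ) : V → V → ℕ := fun p q =>
  if p ∈ T ∧ q ∈ T then A q p else A p q

theorem transposeOn_swap [DecidableEq V] (T : Finset V) (A : V → V → ℕ) :
    transposeOn T (swap A) = swap (transposeOn T A) := by
  funext p q
  simp [transposeOn, swap, and_comm]

section TransposeOnSums

variable [Fintype V] [DecidableEq V] {T : Finset V} {A : V → V → ℕ}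

theorem rowSum_transposeOn (hbal : ∀ p ∈ T, ∑ q ∈ T, A q p = ∑ q ∈ T, A p q) (p : V) :
    ∑ q, transposeOn T A p q = ∑ q, A p q := by
  by_cases hp : p ∈ T
  · refine sum_eq_sum_of_eqOn_compl T ?_ fun q hq => by simp [transposeOn, hq]
    rw [← hbal p hp]
    exact sum_congr rfl fun q hq => by simp [transposeOn, hp, hq]
  · exact sum_congr rfl fun q _ => by simp [transposeOn, hp]

theorem colSum_transposeOn (hbal : ∀ p ∈ T, ∑ q ∈ T, A q p = ∑ q ∈ T, A p q) (q : V) :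
    ∑ p, transposeOn T A p q = ∑ p, A p q := by
  simpa [transposeOn_swap] using
    rowSum_transposeOn (A := swap A) (fun p hp => (hbal p hp).symm) q

end TransposeOnSums

structure IsTriangle (A : V → V → ℕ) (i j l : V) : Prop where
  ij : A i j = 1
  jl : A j l = 1
  li : A l i = 1
  ji : A j i = 0
  lj : A l j = 0
  il : A i l = 0

namespace IsTriangle

variable {A : V → V → ℕ} {i j l : V}

theorem ne_ij (hT : IsTriangle A i j l) : i ≠ j := by rintro rfl; simpa [hT.ji] using hT.ij

theorem ne_jl (hT : IsTriangle A i j l) : j ≠ l := by rintro rfl; simpa [hT.lj] using hT.jl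

theorem ne_il (hT : IsTriangle A i j l) : i ≠ l := by rintro rfl; simpa [hT.il] using hT.li

theorem rotate (hT : IsTriangle A i j l) : IsTriangle A j l i :=
  ⟨hT.jl, hT.li, hT.ij, hT.lj, hT.il, hT.ji⟩

theorem swap (hT : IsTriangle A i j l) : IsTriangle (swap A) i l j :=
  ⟨hT.li, hT.jl, hT.ij, hT.il, hT.lj, hT.ji⟩

theorem inDegree_eq_outDegree [Fintype V] [DecidableEq V] (hT : IsTriangle A i j l)
    (hA : ∀ p, A p p = 0) :
    ∀ p ∈ ({i, j, l} : Finset V), ∑ q ∈ {i, j, l}, A q p = ∑ q ∈ {i, j, l}, A p q := by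
  have := hT.ne_ij; have := hT.ne_jl; have := hT.ne_il
  intro p hp
  simp only [mem_insert, mem_singleton] at hp
  rcases hp with rfl | rfl | rfl <;> simp [*, hT.ij, hT.jl, hT.li, hT.ji, hT.lj, hT.il]

end IsTriangle

theorem card_filter_add_le [Fintype V] [DecidableEq V] {M N : V → V → ℕ}
    (hM : IsDigraphMatrix M) (hN : IsDigraphMatrix N) {i j l : V}
    (hMij : M i j = 1) (hNij : N i j = 0) (hNil : N i l = 1)
    (hno : ∀ k ≠ j, M k j = 0 → M k l = 1 → N k j = 0 ∧ N k l = 1) :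
    #{k | M k j = 0 ∧ M k l = 1} + 1 + N j l ≤ #{k | N k j = 0 ∧ N k l = 1} + M j l := by
  have hij : i ≠ j := by rintro rfl; simp [hM.diag] at hMij
  have hsub : (insert i ({k | M k j = 0 ∧ M k l = 1} : Finset V)).erase j ⊆
      ({k | N k j = 0 ∧ N k l = 1} : Finset V).erase j := by
    intro k hk
    simp only [mem_erase, mem_insert, mem_filter, mem_univ, true_and] at hk ⊢
    obtain ⟨hkj, rfl | hk⟩ := hk
    · exact ⟨hkj, hNij, hNil⟩
    · exact ⟨hkj, hno k hkj hk.1 hk.2⟩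
  have hcard := card_le_card hsub
  have hpos : j ∈ ({k | N k j = 0 ∧ N k l = 1} : Finset V) → 0 < #{k | N k j = 0 ∧ N k l = 1} :=
    fun hj => card_pos.2 ⟨j, hj⟩
  have hjM : j ∈ insert i ({k | M k j = 0 ∧ M k l = 1} : Finset V) ↔ M j l = 1 := by
    simp [hM.diag, hij.symm]
  have hjN : j ∈ ({k | N k j = 0 ∧ N k l = 1} : Finset V) ↔ N j l = 1 := by simp [hN.diag]
  rw [card_erase_eq_ite, card_erase_eq_ite, card_insert_of_notMem (by simp [hMij])] at hcard
  simp only [hjM, hjN] at hcard hpos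
  have := hM.zero_or_one j l
  have := hN.zero_or_one j l
  split_ifs at hcard <;> omega

end Matrices

namespace IsSwitch

variable {m n : ℕ} {M M' : Fin m → Fin n → ℕ}

theorem symm (h : IsSwitch M M') : IsSwitch M' M := by
  obtain ⟨i, k, j, l, hik, hjl, a1, a2, a3, a4, b1, b2, b3, b4, hoff⟩ := h
  refine ⟨i, k, l, j, hik, hjl.symm, b3, b4, b1, b2, a3, a4, a1, a2,
    fun p q hpq => (hoff p q ?_).symm⟩
  simp only [Set.mem_insert_iff, Set.mem_singleton_iff, Prod.mk.injEq, not_or] at hpq ⊢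
  tauto

theorem swap (h : IsSwitch M M') : IsSwitch (swap M) (swap M') := by
  obtain ⟨i, k, j, l, hik, hjl, a1, a2, a3, a4, b1, b2, b3, b4, hoff⟩ := h
  refine ⟨j, l, i, k, hjl, hik, a1, a2, a4, a3, b1, b2, b4, b3, fun p q hpq => hoff q p ?_⟩
  simp only [Set.mem_insert_iff, Set.mem_singleton_iff, Prod.mk.injEq, not_or] at hpq ⊢
  tauto

theorem zero_or_one (h : IsSwitch M M') (hM : ∀ p q, M p q = 0 ∨ M p q = 1) (p : Fin m)
    (q : Fin n) : M' p q = 0 ∨ M' p q = 1 := by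
  obtain ⟨i, k, j, l, -, -, -, -, -, -, b1, b2, b3, b4, hoff⟩ := h
  by_cases hpq : (p, q) ∈ ({(i, j), (k, l), (i, l), (k, j)} : Set (Fin m × Fin n))
  · simp only [Set.mem_insert_iff, Set.mem_singleton_iff, Prod.mk.injEq] at hpq
    rcases hpq with ⟨rfl, rfl⟩ | ⟨rfl, rfl⟩ | ⟨rfl, rfl⟩ | ⟨rfl, rfl⟩ <;> simp [*]
  · rw [hoff p q hpq]
    exact hM p q

theorem rowSum_eq (h : IsSwitch M M') (p : Fin m) : ∑ q, M' p q = ∑ q, M p q := by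
  obtain ⟨i, k, j, l, hik, hjl, a1, a2, a3, a4, b1, b2, b3, b4, hoff⟩ := h
  refine sum_eq_sum_of_eqOn_compl {j, l} ?_ fun q hq => hoff p q (by simp_all)
  rw [sum_pair hjl, sum_pair hjl]
  by_cases hpi : p = i
  · rw [hpi, a1, a3, b1, b3]
  by_cases hpk : p = k
  · rw [hpk, a2, a4, b2, b4]
  rw [hoff p j (by simp [hpi, hpk]), hoff p l (by simp [hpi, hpk])]

end IsSwitch

theorem isSwitch_switch {m n : ℕ} {A : Fin m → Fin n → ℕ} {i k : Fin m} {j l : Fin n}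
    (hik : i ≠ k) (hjl : j ≠ l) (h1 : A i j = 1) (h2 : A k l = 1) (h3 : A i l = 0)
    (h4 : A k j = 0) : IsSwitch A (switch A i k j l) := by
  have hoff : ∀ p q, (p, q) ∉ ({(i, j), (k, l), (i, l), (k, j)} : Set (Fin m × Fin n)) →
      switch A i k j l p q = A p q := by
    intro p q hpq
    simp only [Set.mem_insert_iff, Set.mem_singleton_iff, Prod.mk.injEq, not_or] at hpq
    simp only [switch]
    rw [if_neg (by tauto), if_neg (by tauto)]
  have := hik.symm
  have := hjl.symm
  exact ⟨i, k, j, l, hik, hjl, h1, h2, h3, h4, by simp [switch], by simp [switch, *],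
    by simp [switch, *], by simp [switch, *], hoff⟩

namespace DirectedStep

variable {n : ℕ} {M M' : Fin n → Fin n → ℕ}

theorem rowSum_eq (h : DirectedStep M M') (i : Fin n) : ∑ j, M' i j = ∑ j, M i j := by
  rcases h with ⟨hs, -⟩ | ⟨ρ, hρ, hrow, -⟩
  · exact hs.rowSum_eq i
  · simp only [hρ]
    rw [Equiv.sum_comp ρ (M (ρ i))]
    exact hrow i

theorem swap (h : DirectedStep M M') : DirectedStep (swap M) (swap M') := by
  rcases h with ⟨hs, hd⟩ | ⟨ρ, hρ, hrow, hcol⟩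
  · exact Or.inl ⟨hs.swap, hd⟩
  · exact Or.inr ⟨ρ, fun i j => hρ j i, hcol, hrow⟩

theorem colSum_eq (h : DirectedStep M M') (j : Fin n) : ∑ i, M' i j = ∑ i, M i j :=
  h.swap.rowSum_eq j

theorem isDigraphMatrix (h : DirectedStep M M') (hM : IsDigraphMatrix M) :
    IsDigraphMatrix M' := by
  rcases h with ⟨hs, hd⟩ | ⟨ρ, hρ, -, -⟩
  · exact ⟨hs.zero_or_one hM.zero_or_one, hd⟩
  · exact ⟨fun i j => hρ i j ▸ hM.zero_or_one _ _, fun i => (hρ i i).trans (hM.diag _)⟩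

theorem symm (h : DirectedStep M M') (hM : ∀ i, M i i = 0) : DirectedStep M' M := by
  have hrow := h.rowSum_eq
  have hcol := h.colSum_eq
  rcases h with ⟨hs, -⟩ | ⟨ρ, hρ, -, -⟩
  · exact Or.inl ⟨hs.symm, hM⟩
  refine Or.inr ⟨ρ.symm, fun i j => by simp [hρ], fun i => ?_, fun j => ?_⟩
  · calc ∑ j, M' (ρ.symm i) j = ∑ j, M i (ρ j) := by simp [hρ]
      _ = ∑ j, M' i j := (Equiv.sum_comp ρ (M i)).trans (hrow i).symm
  · calc ∑ i, M' i (ρ.symm j) = ∑ i, M (ρ i) j := by simp [hρ]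
      _ = ∑ i, M' i j := (Equiv.sum_comp ρ (M · j)).trans (hcol j).symm

end DirectedStep

section Chains

variable {n : ℕ} {M M' : Fin n → Fin n → ℕ}

theorem directedStep_switch {i k j l : Fin n} (hM : ∀ p, M p p = 0) (hik : i ≠ k) (hjl : j ≠ l)
    (hil : i ≠ l) (hkj : k ≠ j) (h1 : M i j = 1) (h2 : M k l = 1) (h3 : M i l = 0)
    (h4 : M k j = 0) : DirectedStep M (switch M i k j l) := by
  refine Or.inl ⟨isSwitch_switch hik hjl h1 h2 h3 h4, fun p => ?_⟩
  simp only [switch]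
  split_ifs with h₀ h₁
  · rfl
  · obtain ⟨rfl, rfl⟩ | ⟨rfl, rfl⟩ := h₁ <;> contradiction
  · exact hM p

theorem reflTransGen_swap (h : Relation.ReflTransGen DirectedStep M M') :
    Relation.ReflTransGen DirectedStep (swap M) (swap M') :=
  Relation.ReflTransGen.lift (fun N : Fin n → Fin n → ℕ => swap N) (fun _ _ hs => hs.swap) M M' h

theorem isDigraphMatrix_of_reflTransGen (h : Relation.ReflTransGen DirectedStep M M')
    (hM : IsDigraphMatrix M) : IsDigraphMatrix M' := by
  induction h with
  | refl => exact hM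
  | tail _ hs ih => exact hs.isDigraphMatrix ih

theorem rowSum_eq_of_reflTransGen (h : Relation.ReflTransGen DirectedStep M M') (i : Fin n) :
    ∑ j, M' i j = ∑ j, M i j := by
  induction h with
  | refl => rfl
  | tail _ hs ih => exact (hs.rowSum_eq i).trans ih

theorem colSum_eq_of_reflTransGen (h : Relation.ReflTransGen DirectedStep M M') (j : Fin n) :
    ∑ i, M' i j = ∑ i, M i j :=
  rowSum_eq_of_reflTransGen (reflTransGen_swap h) j

theorem reflTransGen_symm (h : Relation.ReflTransGen DirectedStep M M')
    (hM : IsDigraphMatrix M) : Relation.ReflTransGen DirectedStep M' M := by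
  induction h with
  | refl => exact .refl
  | tail hMb hs ih => exact .head (hs.symm (isDigraphMatrix_of_reflTransGen hMb hM).diag) ih

end Chains

section Triangle

variable {n : ℕ} {A : Fin n → Fin n → ℕ} {p q r x : Fin n}

/- The edge leaving `x` travels `x → q`, `x → p`, `x → r`, `x → q`; on the way the three switches
trade the edges of the triangle for the reversed ones. -/
theorem reflTransGen_transposeOn_of_one_out (hA : IsDigraphMatrix A) (hT : IsTriangle A p q r)
    (hx : x ∉ ({p, q, r} : Finset (Fin n))) (hxp : A x p = 0) (hxq : A x q = 1)
    (hxr : A x r = 0) : Relation.ReflTransGen DirectedStep A (transposeOn {p, q, r} A) := by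
  have := hT.ne_ij; have := hT.ne_jl; have := hT.ne_il
  have := hT.ne_ij.symm; have := hT.ne_jl.symm; have := hT.ne_il.symm
  simp only [mem_insert, mem_singleton, not_or] at hx
  obtain ⟨hx₁, hx₂, hx₃⟩ := hx
  have := Ne.symm hx₁; have := Ne.symm hx₂; have := Ne.symm hx₃
  obtain ⟨hpq, hqr, hrp, hqp, hrq, hpr⟩ := hT
  have s₁ := directedStep_switch hA.diag hx₃ ‹q ≠ p› hx₁ ‹r ≠ q› hxq hrp hxp hrq
  set A₁ := switch A x r q p
  have s₂ := directedStep_switch (s₁.isDigraphMatrix hA).diag ‹q ≠ x› ‹r ≠ p› ‹q ≠ p› hx₃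
    (by simp [A₁, switch, *]) (by simp [A₁, switch, *]) (by simp [A₁, switch, *])
    (by simp [A₁, switch, *])
  set A₂ := switch A₁ q x r p
  have s₃ := directedStep_switch (s₂.isDigraphMatrix (s₁.isDigraphMatrix hA)).diag
    hx₁ ‹r ≠ q› hx₂ ‹p ≠ r›
    (by simp [A₁, A₂, switch, *]) (by simp [A₁, A₂, switch, *]) (by simp [A₁, A₂, switch, *])
    (by simp [A₁, A₂, switch, *])
  have heq : switch A₂ x p r q = transposeOn {p, q, r} A := by
    funext a b
    rcases eq_or_ne a x with rfl | hax <;>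
    [skip; rcases eq_or_eq_or_eq_or_ne a p q r with ha | ha | ha | ⟨ha₁, ha₂, ha₃⟩] <;>
    rcases eq_or_eq_or_eq_or_ne b p q r with hb | hb | hb | ⟨hb₁, hb₂, hb₃⟩ <;>
    simp [A₁, A₂, switch, transposeOn, *]
  exact heq ▸ .head s₁ (.head s₂ (.single s₃))

/- As above, with the missing edge from `x` travelling `x ↛ r`, `x ↛ p`, `x ↛ q`, `x ↛ r`. -/
theorem reflTransGen_transposeOn_of_two_out (hA : IsDigraphMatrix A) (hT : IsTriangle A p q r)
    (hx : x ∉ ({p, q, r} : Finset (Fin n))) (hxp : A x p = 1) (hxq : A x q = 1)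
    (hxr : A x r = 0) : Relation.ReflTransGen DirectedStep A (transposeOn {p, q, r} A) := by
  have := hT.ne_ij; have := hT.ne_jl; have := hT.ne_il
  have := hT.ne_ij.symm; have := hT.ne_jl.symm; have := hT.ne_il.symm
  simp only [mem_insert, mem_singleton, not_or] at hx
  obtain ⟨hx₁, hx₂, hx₃⟩ := hx
  have := Ne.symm hx₁; have := Ne.symm hx₂; have := Ne.symm hx₃
  obtain ⟨hpq, hqr, hrp, hqp, hrq, hpr⟩ := hT
  have s₁ := directedStep_switch hA.diag hx₂ ‹p ≠ r› hx₃ ‹q ≠ p› hxp hqr hxr hqp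
  set A₁ := switch A x q p r
  have s₂ := directedStep_switch (s₁.isDigraphMatrix hA).diag hx₃ ‹q ≠ p› hx₁ ‹r ≠ q›
    (by simp [A₁, switch, *]) (by simp [A₁, switch, *]) (by simp [A₁, switch, *])
    (by simp [A₁, switch, *])
  set A₂ := switch A₁ x r q p
  have s₃ := directedStep_switch (s₂.isDigraphMatrix (s₁.isDigraphMatrix hA)).diag
    hx₁ ‹r ≠ q› hx₂ ‹p ≠ r›
    (by simp [A₁, A₂, switch, *]) (by simp [A₁, A₂, switch, *]) (by simp [A₁, A₂, switch, *])
    (by simp [A₁, A₂, switch, *])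
  have heq : switch A₂ x p r q = transposeOn {p, q, r} A := by
    funext a b
    rcases eq_or_ne a x with rfl | hax <;>
    [skip; rcases eq_or_eq_or_eq_or_ne a p q r with ha | ha | ha | ⟨ha₁, ha₂, ha₃⟩] <;>
    rcases eq_or_eq_or_eq_or_ne b p q r with hb | hb | hb | ⟨hb₁, hb₂, hb₃⟩ <;>
    simp [A₁, A₂, switch, transposeOn, *]
  exact heq ▸ .head s₁ (.head s₂ (.single s₃))

theorem reflTransGen_transposeOn_of_out {i j l : Fin n} (hA : IsDigraphMatrix A)
    (hT : IsTriangle A i j l) (hx : x ∉ ({i, j, l} : Finset (Fin n))) (hne : A x j ≠ A x l) :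
    Relation.ReflTransGen DirectedStep A (transposeOn {i, j, l} A) := by
  have hrot : ∀ a b c : Fin n, ({b, c, a} : Finset (Fin n)) = {a, b, c} := fun a b c => by
    rw [pair_comm, insert_comm]
  rcases hA.zero_or_one x j with hj | hj <;> rcases hA.zero_or_one x l with hl | hl
  · exact absurd (hj.trans hl.symm) hne
  · rcases hA.zero_or_one x i with hi | hi
    · rw [← hrot] at hx ⊢
      exact reflTransGen_transposeOn_of_one_out hA hT.rotate hx hj hl hi
    · rw [← hrot, ← hrot] at hx ⊢
      exact reflTransGen_transposeOn_of_two_out hA hT.rotate.rotate hx hl hi hj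
  · rcases hA.zero_or_one x i with hi | hi
    · exact reflTransGen_transposeOn_of_one_out hA hT hx hi hj hl
    · exact reflTransGen_transposeOn_of_two_out hA hT hx hi hj hl
  · exact absurd (hj.trans hl.symm) hne

theorem directedStep_transposeOn_of_twins {i j l : Fin n} (hA : IsDigraphMatrix A)
    (hT : IsTriangle A i j l) (hout : ∀ x ∉ ({i, j, l} : Finset (Fin n)), A x j = A x l)
    (hin : ∀ x ∉ ({i, j, l} : Finset (Fin n)), A j x = A l x) :
    DirectedStep A (transposeOn {i, j, l} A) := by
  have := hT.ne_ij; have := hT.ne_jl; have := hT.ne_il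
  have := hT.ne_ij.symm; have := hT.ne_jl.symm; have := hT.ne_il.symm
  have hC : ∀ a b, transposeOn {i, j, l} A a b = A (Equiv.swap j l a) (Equiv.swap j l b) := by
    intro a b
    rcases eq_or_eq_or_eq_or_ne a i j l with ha | ha | ha | ⟨ha₁, ha₂, ha₃⟩ <;>
    rcases eq_or_eq_or_eq_or_ne b i j l with hb | hb | hb | ⟨hb₁, hb₂, hb₃⟩ <;>
    simp [transposeOn, Equiv.swap_apply_of_ne_of_ne, hT.ij, hT.jl, hT.li, hT.ji, hT.lj, hT.il,
      hA.diag, *]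
  have hbal := hT.inDegree_eq_outDegree hA.diag
  refine Or.inr ⟨Equiv.swap j l, hC, fun a => ?_, fun b => ?_⟩
  · rw [← rowSum_transposeOn hbal a]
    simp only [hC]
    exact (Equiv.sum_comp _ _).symm
  · rw [← colSum_transposeOn hbal b]
    simp only [hC]
    exact (Equiv.sum_comp _ (fun a => A a _)).symm

theorem reflTransGen_transposeOn_of_triangle {i j l : Fin n} (hA : IsDigraphMatrix A)
    (hT : IsTriangle A i j l) :
    Relation.ReflTransGen DirectedStep A (transposeOn {i, j, l} A) := by
  by_cases hout : ∃ x ∉ ({i, j, l} : Finset (Fin n)), A x j ≠ A x l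
  · obtain ⟨x, hx, hne⟩ := hout
    exact reflTransGen_transposeOn_of_out hA hT hx hne
  by_cases hin : ∃ x ∉ ({i, j, l} : Finset (Fin n)), A j x ≠ A l x
  · obtain ⟨x, hx, hne⟩ := hin
    have h := reflTransGen_transposeOn_of_out hA.swap hT.swap (x := x) (by rwa [pair_comm])
      (Ne.symm hne)
    rw [transposeOn_swap, pair_comm] at h
    exact reflTransGen_swap h
  push Not at hout hin
  exact .single (directedStep_transposeOn_of_twins hA hT hout hin)

end Triangle

def HasCloserPair {n : ℕ} (A B : Fin n → Fin n → ℕ) : Prop :=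
  ∃ A' B', Relation.ReflTransGen DirectedStep A A' ∧ Relation.ReflTransGen DirectedStep B B' ∧
    diffCount A' B' < diffCount A B

namespace HasCloserPair

variable {n : ℕ} {A B : Fin n → Fin n → ℕ}

theorem symm (h : HasCloserPair A B) : HasCloserPair B A := by
  obtain ⟨A', B', hA, hB, hlt⟩ := h
  exact ⟨B', A', hB, hA, by rwa [diffCount_comm, diffCount_comm B]⟩

theorem of_swap (h : HasCloserPair (swap A) (swap B)) : HasCloserPair A B := by
  obtain ⟨A', B', hA, hB, hlt⟩ := h
  exact ⟨swap A', swap B', reflTransGen_swap hA, reflTransGen_swap hB,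
    by rw [diffCount_swap, ← diffCount_swap A B]; exact hlt⟩

end HasCloserPair

section CloserPair

variable {n : ℕ} {A B : Fin n → Fin n → ℕ} {i j k l : Fin n}

theorem hasCloserPair_of_switch (hA : IsDigraphMatrix A) (hB : IsDigraphMatrix B)
    (hAij : A i j = 1) (hAil : A i l = 0) (hBij : B i j = 0) (hBil : B i l = 1) (hkj : k ≠ j)
    (hAkj : A k j = 0) (hAkl : A k l = 1) (hBk : ¬(B k j = 0 ∧ B k l = 1)) :
    HasCloserPair A B := by
  have hik : i ≠ k := by rintro rfl; simp [hAil] at hAkl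
  have hjl : j ≠ l := by rintro rfl; simp [hAil] at hAij
  have hil : i ≠ l := by rintro rfl; simp [hB.diag] at hBil
  refine ⟨switch A i k j l, B,
    .single (directedStep_switch hA.diag hik hjl hil hkj hAij hAkl hAil hAkj), .refl,
    diffCount_lt_of_eqOn_compl {(i, j), (i, l), (k, j), (k, l)} ?_ ?_⟩
  · rintro ⟨p, q⟩ hpq
    simp only [mem_insert, mem_singleton, Prod.mk.injEq, not_or] at hpq
    simp only [switch]
    rw [if_neg (by tauto), if_neg (by tauto)]
  · have := hik.symm; have := hjl.symm
    rw [card_filter, card_filter]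
    rcases hB.zero_or_one k j with h | h <;> rcases hB.zero_or_one k l with h' | h' <;>
      simp_all [sum_insert, switch]

theorem hasCloserPair_or_reversed_edge (hA : IsDigraphMatrix A) (hB : IsDigraphMatrix B)
    (hj : ∑ k, A k j = ∑ k, B k j) (hl : ∑ k, A k l = ∑ k, B k l)
    (hAij : A i j = 1) (hAil : A i l = 0) (hBij : B i j = 0) (hBil : B i l = 1) :
    HasCloserPair A B ∨ A j l = 1 ∧ A l j = 0 ∧ B j l = 0 ∧ B l j = 1 := by
  refine or_iff_not_imp_left.2 fun hno => ?_
  have hcA := card_filter_add_le hA hB hAij hBij hBil fun k hk hkj hkl =>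
    not_not.1 fun hBk => hno (hasCloserPair_of_switch hA hB hAij hAil hBij hBil hk hkj hkl hBk)
  have hcB := card_filter_add_le hB hA hBil hAil hAij fun k hk hkl hkj =>
    not_not.1 fun hAk =>
      hno (hasCloserPair_of_switch hB hA hBil hBij hAil hAij hk hkl hkj hAk).symm
  have heA := sum_add_card_filter_eq (fun k => hA.zero_or_one k j) (fun k => hA.zero_or_one k l)
  have heB := sum_add_card_filter_eq (fun k => hB.zero_or_one k j) (fun k => hB.zero_or_one k l)
  have := hA.zero_or_one j l; have := hA.zero_or_one l j
  have := hB.zero_or_one j l; have := hB.zero_or_one l j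
  -- the four counts cancel, leaving `2 + B j l + A l j ≤ A j l + B l j`
  omega

theorem hasCloserPair_of_triangle (hA : IsDigraphMatrix A) (hB : IsDigraphMatrix B)
    (hTA : IsTriangle A i j l) (hTB : IsTriangle B i l j) : HasCloserPair A B := by
  have hon : ∀ z ∈ ({i, j, l} : Finset (Fin n)) ×ˢ {i, j, l},
      transposeOn {i, j, l} A z.1 z.2 = B z.1 z.2 := by
    rintro ⟨p, q⟩ hz
    simp only [mem_product, mem_insert, mem_singleton] at hz
    obtain ⟨hp | hp | hp, hq | hq | hq⟩ := hz <;>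
      simp [transposeOn, hp, hq, hA.diag, hB.diag, hTA.ij, hTA.jl, hTA.li, hTA.ji, hTA.lj,
        hTA.il, hTB.ij, hTB.jl, hTB.li, hTB.ji, hTB.lj, hTB.il]
  refine ⟨transposeOn {i, j, l} A, B, reflTransGen_transposeOn_of_triangle hA hTA, .refl,
    diffCount_lt_of_eqOn_compl (({i, j, l} : Finset (Fin n)) ×ˢ {i, j, l}) (fun z hz => ?_) ?_⟩
  · simp only [transposeOn]
    rw [if_neg (by simpa using hz)]
  · rw [filter_false_of_mem fun z hz => not_not.2 (hon z hz), card_empty, card_pos]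
    exact ⟨(i, j), by simp [hTA.ij, hTB.il]⟩

theorem exists_row_mismatch_of_ne (hA : IsDigraphMatrix A) (hB : IsDigraphMatrix B)
    (hrow : ∀ i, ∑ j, A i j = ∑ j, B i j) (hne : A ≠ B) :
    ∃ i j l, A i j = 1 ∧ A i l = 0 ∧ B i j = 0 ∧ B i l = 1 := by
  obtain ⟨i, hi⟩ := Function.ne_iff.1 hne
  obtain ⟨j, hj⟩ := exists_lt_of_sum_eq_of_ne (hrow i).symm (Ne.symm hi)
  obtain ⟨l, hl⟩ := exists_lt_of_sum_eq_of_ne (hrow i) hi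
  have := hA.zero_or_one i j; have := hB.zero_or_one i j
  have := hA.zero_or_one i l; have := hB.zero_or_one i l
  exact ⟨i, j, l, by omega, by omega, by omega, by omega⟩

theorem hasCloserPair_of_ne (hA : IsDigraphMatrix A) (hB : IsDigraphMatrix B)
    (hrow : ∀ i, ∑ j, A i j = ∑ j, B i j) (hcol : ∀ j, ∑ i, A i j = ∑ i, B i j) (hne : A ≠ B) :
    HasCloserPair A B := by
  obtain ⟨i, j, l, hAij, hAil, hBij, hBil⟩ := exists_row_mismatch_of_ne hA hB hrow hne
  by_contra hno
  obtain ⟨hAjl, hAlj, hBjl, hBlj⟩ :=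
    (hasCloserPair_or_reversed_edge hA hB (hcol j) (hcol l) hAij hAil hBij hBil).resolve_left hno
  obtain ⟨hAli, -, hBli, -⟩ := (hasCloserPair_or_reversed_edge hA.swap hB.swap (hrow i) (hrow l)
    hAij hAlj hBij hBlj).resolve_left (mt HasCloserPair.of_swap hno)
  obtain ⟨-, hAji, -, hBji⟩ :=
    (hasCloserPair_or_reversed_edge hA hB (hcol i) (hcol j) hAli hAlj hBli hBlj).resolve_left hno
  exact hno (hasCloserPair_of_triangle hA hB ⟨hAij, hAjl, hAli, hAji, hAlj, hAil⟩
    ⟨hBil, hBlj, hBji, hBli, hBjl, hBij⟩)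

end CloserPair

theorem reflTransGen_directedStep_of_sum_eq {n : ℕ} {A B : Fin n → Fin n → ℕ}
    (hA : IsDigraphMatrix A) (hB : IsDigraphMatrix B)
    (hrow : ∀ i, ∑ j, A i j = ∑ j, B i j) (hcol : ∀ j, ∑ i, A i j = ∑ i, B i j) :
    Relation.ReflTransGen DirectedStep A B := by
  by_cases hAB : A = B
  · exact hAB ▸ .refl
  obtain ⟨A', B', hAA', hBB', hlt⟩ := hasCloserPair_of_ne hA hB hrow hcol hAB
  have hA'B' := reflTransGen_directedStep_of_sum_eq (isDigraphMatrix_of_reflTransGen hAA' hA)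
    (isDigraphMatrix_of_reflTransGen hBB' hB)
    (fun i => by rw [rowSum_eq_of_reflTransGen hAA', rowSum_eq_of_reflTransGen hBB', hrow])
    (fun j => by rw [colSum_eq_of_reflTransGen hAA', colSum_eq_of_reflTransGen hBB', hcol])
  exact hAA'.trans (hA'B'.trans (reflTransGen_symm hBB' hB))
termination_by diffCount A B

/-- the switch chain with degree-preserving relabelling is connected on
the set of simple directed graphs with given in- and out-degrees: any two adjacency
matrices with the same row sums and the same column sums are connected by a finite
sequence of diagonal-preserving switches and degree-preserving relabellings. -/
theorem directed_switch_chain_with_relabelling_connected {n : ℕ}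
    (A B : Fin n → Fin n → ℕ)
    (hA01 : ∀ i j, A i j = 0 ∨ A i j = 1)
    (hB01 : ∀ i j, B i j = 0 ∨ B i j = 1)
    (hAdiag : ∀ i, A i i = 0) (hBdiag : ∀ i, B i i = 0)
    (hrow : ∀ i, ∑ j, A i j = ∑ j, B i j)
    (hcol : ∀ j, ∑ i, A i j = ∑ i, B i j) :
    Relation.ReflTransGen DirectedStep A B :=
  reflTransGen_directedStep_of_sum_eq ⟨hA01, hAdiag⟩ ⟨hB01, hBdiag⟩ hrow hcol
end

section
/- For every integer n ≥ 2, the real 2×2 matrix P̄ with first row (1 − 4(n−1)/(n(2n−1)), 4(n−1)/(n(2n−1))) and second row (2/(n(2n−1)), 1 − 2/(n(2n−1))) is a stochastic matrix whose eigenvalues are exactly 1 and 1 − 2/n; equivalently, its characteristic polynomial is (λ − 1)(λ − (1 − 2/n)). In particular the spectral gap of P̄ is 2/n. -/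
open Finset Polynomial

/-!
A two-state chain with leaving probabilities `a` and `b` has characteristic polynomial
`(X - 1)(X - (1 - (a + b)))`. For the projected switch chain the two rates add up to
`(4(n - 1) + 2) / (n(2n - 1)) = 2 / n`, since `4(n - 1) + 2 = 2(2n - 1)`.
-/

section TwoStateChain

variable {R : Type*}

theorem sum_twoStateMatrix_row [CommRing R] (a b : R) (i : Fin 2) :
    ∑ j, !![1 - a, a; b, 1 - b] i j = 1 := by
  fin_cases i <;> simp [Fin.sum_univ_two]

theorem twoStateMatrix_nonneg [CommRing R] [PartialOrder R] [IsOrderedRing R] {a b : R}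
    (ha₀ : 0 ≤ a) (ha₁ : a ≤ 1) (hb₀ : 0 ≤ b) (hb₁ : b ≤ 1) (i j : Fin 2) :
    0 ≤ !![1 - a, a; b, 1 - b] i j := by
  fin_cases i <;> fin_cases j <;> simp [ha₀, ha₁, hb₀, hb₁]

theorem charpoly_twoStateMatrix [CommRing R] (a b : R) :
    (!![1 - a, a; b, 1 - b]).charpoly = (X - C 1) * (X - C (1 - (a + b))) := by
  rw [Matrix.charpoly, Matrix.det_fin_two]
  simp only [Matrix.charmatrix_apply_eq, Matrix.charmatrix_apply_ne, Matrix.of_apply,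
    Matrix.cons_val', Matrix.cons_val_zero, Matrix.cons_val_one, Matrix.cons_val_fin_one,
    map_sub, map_add, map_one, ne_eq, zero_ne_one, one_ne_zero, not_false_eq_true]
  ring

end TwoStateChain

section SwitchChainRates

variable {x : ℝ}

theorem switch_rate_up_nonneg (hx : 1 ≤ x) : 0 ≤ 4 * (x - 1) / (x * (2 * x - 1)) := by
  have : 0 ≤ x * (2 * x - 1) := by nlinarith
  positivity

theorem switch_rate_up_le_one (hx : 1 ≤ x) : 4 * (x - 1) / (x * (2 * x - 1)) ≤ 1 := by
  rw [div_le_one (by nlinarith)]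
  nlinarith [sq_nonneg (4 * x - 5)]

theorem switch_rate_down_nonneg (hx : 1 ≤ x) : 0 ≤ 2 / (x * (2 * x - 1)) := by
  have : 0 ≤ x * (2 * x - 1) := by nlinarith
  positivity

theorem switch_rate_down_le_one (hx : 2 ≤ x) : 2 / (x * (2 * x - 1)) ≤ 1 := by
  rw [div_le_one (by nlinarith)]
  nlinarith

theorem switch_rate_up_add_down (hx : 2 * x - 1 ≠ 0) :
    4 * (x - 1) / (x * (2 * x - 1)) + 2 / (x * (2 * x - 1)) = 2 / x := by
  rw [← add_div, mul_comm x, ← div_div, show 4 * (x - 1) + 2 = 2 * (2 * x - 1) by ring,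
    mul_div_cancel_right₀ _ hx]

end SwitchChainRates

/-- for `n ≥ 2`, the transition matrix of the projected switch chain on
the two isomorphism classes of bipartite graphs with degrees `((2,…,2),(n-1,n-1,1,1))`
is a stochastic matrix whose characteristic polynomial is
`(λ - 1)(λ - (1 - 2/n))`, i.e. its eigenvalues are exactly `1` and `1 - 2/n`;
in particular its spectral gap is `2/n`. -/
theorem projected_switch_chain_spectral_gap (n : ℕ) (hn : 2 ≤ n) :
    ∀ a b : ℝ, a = 4 * ((n : ℝ) - 1) / ((n : ℝ) * (2 * (n : ℝ) - 1)) →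
      b = 2 / ((n : ℝ) * (2 * (n : ℝ) - 1)) →
      ∀ Pbar : Matrix (Fin 2) (Fin 2) ℝ, Pbar = !![1 - a, a; b, 1 - b] →
        (∀ i j, 0 ≤ Pbar i j) ∧
        (∀ i, ∑ j, Pbar i j = 1) ∧
        Pbar.charpoly = (X - C 1) * (X - C (1 - 2 / (n : ℝ))) ∧
        1 - |1 - 2 / (n : ℝ)| = 2 / (n : ℝ) := by
  rintro a b rfl rfl Pbar rfl
  have hx : (2 : ℝ) ≤ n := by exact_mod_cast hn
  have hgap_le_one : 2 / (n : ℝ) ≤ 1 := by rw [div_le_one (by linarith)]; exact hx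
  refine ⟨twoStateMatrix_nonneg (switch_rate_up_nonneg (by linarith))
      (switch_rate_up_le_one (by linarith)) (switch_rate_down_nonneg (by linarith))
      (switch_rate_down_le_one hx),
    sum_twoStateMatrix_row _ _, ?_, ?_⟩
  · rw [charpoly_twoStateMatrix, switch_rate_up_add_down (by linarith)]
  · rw [abs_of_nonneg (sub_nonneg.2 hgap_le_one)]
    ring
end
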